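/- For integers \(k \ge 1\) and even integer \(\beta \ge 2\), the identity \(\binom{\beta}{\beta/2+k}\binom{\beta}{\beta/2}^{-1} \frac{\Gamma_{\beta/2+k,\beta}\,\Gamma_{\beta/2-k,\beta}}{(\Gamma_{\beta/2,\beta})^2} = \frac{1}{2^{2k^2/\beta}} \prod_{j=1}^{k} \frac{\Gamma(1+2j/\beta)}{\Gamma(1+2(j-k)/\beta)}\) holds, where \(0 \le k \le \beta/2\). -/

import Mathlib

open Real Finset

/-- The Mehta constant `Γ_{n,β}`. -/
noncomputable def GammaMehta (n : ℕ) (β : ℝ) : ℝ :=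
  Real.pi ^ ((n : ℝ) / 2) / 2 ^ ((n * (n - 1) : ℝ) / β) *
    ∏ j ∈ Finset.Icc 2 n, Real.Gamma (1 + 2 * j / β) / Real.Gamma (1 + 2 / β)

/-!
Write `β = 2m`. The Gamma products of `Γ_{m+k,β}` and `Γ_{m-k,β}` differ from that of `Γ_{m,β}` by
`k` factors `Γ(1 + 2(m+j)/β)` and `Γ(1 + 2(m-k+j)/β)`. Since `2m/β = 1`, the functional equation
`Γ(s+1) = sΓ(s)` turns their quotients into `Γ(1 + 2j/β)/Γ(1 + 2(j-k)/β)` times `(m+j)/(m-k+j)`,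
and these rational factors are exactly cancelled by the ratio of binomial coefficients
`m!²/((m+k)!(m-k)!)`. The powers of `π` cancel, and those of `2` leave `2^(-2k²/β)`.
-/

open scoped Nat

theorem Finset.prod_Icc_one_eq_prod_range {M : Type*} [CommMonoid M] (f : ℕ → M) (n : ℕ) :
    ∏ j ∈ Icc 1 n, f j = ∏ i ∈ range n, f (i + 1) := by
  rw [← Ico_add_one_right_eq_Icc, prod_Ico_eq_prod_range, Nat.add_sub_cancel]
  simp only [add_comm]

theorem Finset.prod_range_add_mul_prod_range_sub {K : Type*} [Field K] (f : ℕ → K) {m k : ℕ}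
    (hkm : k ≤ m) (hf : ∀ i < k, f (m - k + i) ≠ 0) :
    (∏ i ∈ range (m + k), f i) * ∏ i ∈ range (m - k), f i
      = (∏ i ∈ range m, f i) ^ 2 * ∏ i ∈ range k, f (m + i) / f (m - k + i) := by
  have hsplit : ∏ i ∈ range m, f i
      = (∏ i ∈ range (m - k), f i) * ∏ i ∈ range k, f (m - k + i) := by
    rw [← prod_range_add, Nat.sub_add_cancel hkm]
  have htail : ∏ i ∈ range k, f (m - k + i) ≠ 0 :=
    prod_ne_zero_iff.mpr fun i hi => hf i (mem_range.mp hi)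
  rw [prod_range_add, prod_div_distrib, hsplit]
  field_simp

theorem Nat.cast_choose_div_cast_choose_central (m k : ℕ) (hkm : k ≤ m) :
    ((m + m).choose (m + k) : ℝ) / (m + m).choose m
      = ∏ i ∈ range k, ((m : ℝ) - k + i + 1) / (m + i + 1) := by
  have hfact := prod_range_add_mul_prod_range_sub (fun i : ℕ => (i : ℝ) + 1) hkm
    fun i _ => by positivity
  simp only [← Nat.cast_add_one, ← Nat.cast_prod, prod_range_add_one_eq_factorial] at hfact
  push_cast [Nat.cast_sub hkm] at hfact
  have hm : (m ! : ℝ) ≠ 0 := by positivity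
  calc ((m + m).choose (m + k) : ℝ) / (m + m).choose m
      = (m ! : ℝ) ^ 2 / ((m + k)! * (m - k)!) := by
        rw [Nat.cast_choose ℝ (by omega : m + k ≤ m + m),
          Nat.cast_choose ℝ (by omega : m ≤ m + m), show m + m - (m + k) = m - k by omega,
          Nat.add_sub_cancel, div_div_div_cancel_left' _ _ (by positivity)]
        ring
    _ = ∏ i ∈ range k, ((m : ℝ) - k + i + 1) / (m + i + 1) := by
        rw [hfact, div_mul_eq_div_div, div_self (pow_ne_zero 2 hm), one_div,
          ← prod_inv_distrib]
        simp only [inv_div]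

theorem Real.Gamma_ratio_shift_half {β : ℝ} (hβ : β ≠ 0) {x y : ℝ} (hx : β / 2 + x ≠ 0)
    (hy : β / 2 + y ≠ 0) :
    (β / 2 + y) / (β / 2 + x) * (Gamma (1 + 2 * (β / 2 + x) / β) / Gamma (1 + 2 * (β / 2 + y) / β))
      = Gamma (1 + 2 * x / β) / Gamma (1 + 2 * y / β) := by
  have hshift : ∀ z, β / 2 + z ≠ 0 →
      Gamma (1 + 2 * (β / 2 + z) / β) = 2 / β * (β / 2 + z) * Gamma (1 + 2 * z / β) := by
    intro z hz
    have hz' : 1 + 2 * z / β = 2 / β * (β / 2 + z) := by field_simp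
    rw [← hz', ← Gamma_add_one (by rw [hz']; positivity)]
    congr 1; field_simp; ring
  have hcancel :
      (β / 2 + y) / (β / 2 + x) * (2 / β * (β / 2 + x) / (2 / β * (β / 2 + y))) = 1 := by
    rw [mul_div_mul_left _ _ (div_ne_zero two_ne_zero hβ), div_mul_div_cancel₀ hx, div_self hy]
  rw [hshift x hx, hshift y hy, mul_div_mul_comm, ← mul_assoc, hcancel, one_mul]

noncomputable def mehtaPrefactor (n : ℕ) (β : ℝ) : ℝ :=
  π ^ ((n : ℝ) / 2) / 2 ^ ((n * (n - 1) : ℝ) / β)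

noncomputable def mehtaGammaProd (n : ℕ) (β : ℝ) : ℝ :=
  ∏ i ∈ range n, Gamma (1 + 2 * ((i : ℝ) + 1) / β) / Gamma (1 + 2 / β)

theorem GammaMehta_eq_mul {β : ℝ} (hβ : Gamma (1 + 2 / β) ≠ 0) (n : ℕ) :
    GammaMehta n β = mehtaPrefactor n β * mehtaGammaProd n β := by
  have hIcc : Icc 2 n ⊆ Icc 1 n := Icc_subset_Icc_left one_le_two
  have hone : ∀ j ∈ Icc 1 n, j ∉ Icc 2 n → Gamma (1 + 2 * j / β) / Gamma (1 + 2 / β) = 1 := by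
    intro j hj hj'
    obtain rfl : j = 1 := by simp only [mem_Icc] at hj hj'; omega
    simpa using div_self hβ
  rw [GammaMehta, mehtaPrefactor, mehtaGammaProd, prod_subset hIcc hone,
    prod_Icc_one_eq_prod_range]
  push_cast
  rfl

theorem mehtaPrefactor_ratio (β : ℝ) {m k : ℕ} (hkm : k ≤ m) :
    mehtaPrefactor (m + k) β * mehtaPrefactor (m - k) β / mehtaPrefactor m β ^ 2
      = 1 / 2 ^ ((2 * k ^ 2 : ℝ) / β) := by
  have hπ : π ^ (((m + k : ℕ) : ℝ) / 2) * π ^ (((m - k : ℕ) : ℝ) / 2)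
      = (π ^ ((m : ℝ) / 2)) ^ 2 := by
    rw [← rpow_add pi_pos, ← rpow_natCast, ← rpow_mul pi_pos.le]
    push_cast [Nat.cast_sub hkm]
    ring_nf
  have htwo : (2 : ℝ) ^ ((((m + k : ℕ) : ℝ) * ((m + k : ℕ) - 1)) / β)
        * 2 ^ ((((m - k : ℕ) : ℝ) * ((m - k : ℕ) - 1)) / β)
      = (2 ^ (((m : ℝ) * (m - 1)) / β)) ^ 2 * 2 ^ ((2 * k ^ 2 : ℝ) / β) := by
    rw [← rpow_add two_pos, ← rpow_natCast, ← rpow_mul zero_le_two, ← rpow_add two_pos]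
    push_cast [Nat.cast_sub hkm]
    ring_nf
  rw [mehtaPrefactor, mehtaPrefactor, mehtaPrefactor, div_mul_div_comm, hπ, htwo]
  field_simp

theorem choose_mul_mehtaGammaProd_ratio {β : ℝ} {m k : ℕ} (hβ : β / 2 = m) (hkm : k ≤ m) :
    ((m + m).choose (m + k) : ℝ) / (m + m).choose m
        * (mehtaGammaProd (m + k) β * mehtaGammaProd (m - k) β / mehtaGammaProd m β ^ 2)
      = ∏ j ∈ Icc 1 k, Gamma (1 + 2 * j / β) / Gamma (1 + 2 * ((j : ℝ) - k) / β) := by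
  have hβ0 : 0 ≤ β := by linarith [(Nat.cast_nonneg m : (0 : ℝ) ≤ m)]
  set g : ℕ → ℝ := fun i => Gamma (1 + 2 * ((i : ℝ) + 1) / β) / Gamma (1 + 2 / β)
  have hc : 0 < Gamma (1 + 2 / β) := Gamma_pos_of_pos (by positivity)
  have hg : ∀ i, 0 < g i := fun i => div_pos (Gamma_pos_of_pos (by positivity)) hc
  have hgm : (∏ i ∈ range m, g i) ^ 2 ≠ 0 := pow_ne_zero 2 (prod_pos fun i _ => hg i).ne'
  rw [mehtaGammaProd, mehtaGammaProd, mehtaGammaProd,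
    prod_range_add_mul_prod_range_sub g hkm fun _ _ => (hg _).ne', mul_div_cancel_left₀ _ hgm,
    Nat.cast_choose_div_cast_choose_central m k hkm, ← prod_mul_distrib,
    prod_Icc_one_eq_prod_range]
  refine prod_congr rfl fun i hi => ?_
  have hkmR : (k : ℝ) ≤ m := Nat.cast_le.mpr hkm
  have hβne : β ≠ 0 := by
    have : (0 : ℝ) < m := Nat.cast_pos.mpr (by simp only [mem_range] at hi; omega)
    linarith
  have hshift := Gamma_ratio_shift_half hβne (x := i + 1) (y := i + 1 - k) (by positivity)
    (by rw [hβ]; exact ne_of_gt (by linarith [(Nat.cast_nonneg i : (0 : ℝ) ≤ i)]))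
  simp only [g, div_div_div_cancel_right₀ hc.ne']
  push_cast [Nat.cast_sub hkm]
  rw [← hβ]
  convert hshift using 3 <;> ring_nf

theorem gammaMehta_ratio_general (β k : ℕ) (hβ : Even β)
    (hkβ : k ≤ β / 2) :
    ((β.choose (β / 2 + k) : ℝ) / (β.choose (β / 2) : ℝ)) *
        (GammaMehta (β / 2 + k) β * GammaMehta (β / 2 - k) β) /
          (GammaMehta (β / 2) β) ^ 2
      = 1 / 2 ^ ((2 * k ^ 2 : ℝ) / β) *
          ∏ j ∈ Finset.Icc 1 k,
            Real.Gamma (1 + 2 * j / β) / Real.Gamma (1 + 2 * ((j : ℝ) - k) / β) := by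
  obtain ⟨m, rfl⟩ := hβ
  rw [show (m + m) / 2 = m by omega] at hkβ ⊢
  have hΓ : Gamma (1 + 2 / ((m + m : ℕ) : ℝ)) ≠ 0 := (Gamma_pos_of_pos (by positivity)).ne'
  rw [← mehtaPrefactor_ratio _ hkβ,
    ← choose_mul_mehtaGammaProd_ratio (by push_cast; ring) hkβ]
  simp only [GammaMehta_eq_mul hΓ]
  ring

/-- Ratio identity for the Mehta constants. -/
theorem gammaMehta_ratio (β k : ℕ) (hβ : Even β) (hβ2 : 2 ≤ β) (hk : 1 ≤ k)
    (hkβ : k ≤ β / 2) :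
    ((β.choose (β / 2 + k) : ℝ) / (β.choose (β / 2) : ℝ)) *
        (GammaMehta (β / 2 + k) β * GammaMehta (β / 2 - k) β) /
          (GammaMehta (β / 2) β) ^ 2
      = 1 / 2 ^ ((2 * k ^ 2 : ℝ) / β) *
          ∏ j ∈ Finset.Icc 1 k,
            Real.Gamma (1 + 2 * j / β) / Real.Gamma (1 + 2 * ((j : ℝ) - k) / β) :=
  gammaMehta_ratio_general β k hβ hkβ
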